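/- arXiv:1708.02797 — 2 statements merged into one kernel-verified Lean document; each statement's English description precedes it below -/
import Mathlib

section
/- Let L/k be a Galois field extension (possibly infinite) with Galois group G, and let V be a k-vector space, with G acting on the base change V ⊗_k L by g · (v ⊗ a) = v ⊗ g(a). Then the canonical k-linear map V → V ⊗_k L, v ↦ v ⊗ 1, is injective and its image is exactly the subspace (V ⊗_k L)^G of G-invariant elements. -/
/-!
A basis of `V` indexed by `ι` identifies `V ⊗[k] L` with `ι →₀ L`, and under this
identification `g` acts coordinatewise. So an element is `G`-invariant iff each of its
coordinates lies in `L^G`, which is `k` because `L/k` is Galois, i.e. iff it is of the form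
`v ⊗ 1`. Injectivity of `v ↦ v ⊗ 1` is flatness of `V` applied to `k → L`.
-/

open TensorProduct

section Basis

variable {R ι V N N' : Type*} [CommSemiring R] [DecidableEq ι] [AddCommMonoid V] [Module R V]
  [AddCommMonoid N] [Module R N] [AddCommMonoid N'] [Module R N']

theorem TensorProduct.finsuppScalarLeft_lTensor (f : N →ₗ[R] N') (x : (ι →₀ R) ⊗[R] N) :
    finsuppScalarLeft R N' ι (f.lTensor _ x) =
      (finsuppScalarLeft R N ι x).mapRange f f.map_zero := by
  induction x using TensorProduct.induction_on with
  | zero => simp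
  | tmul p n => ext i; simp [finsuppScalarLeft_apply_tmul_apply]
  | add x y hx hy => simp only [map_add, hx, hy, Finsupp.mapRange_add f.map_add]

variable (N) in
noncomputable def Module.Basis.tensorFinsupp (b : Module.Basis ι R V) :
    V ⊗[R] N ≃ₗ[R] (ι →₀ N) :=
  (TensorProduct.congr b.repr (LinearEquiv.refl R N)).trans (finsuppScalarLeft R N ι)

theorem Module.Basis.tensorFinsupp_tmul (b : Module.Basis ι R V) (v : V) (n : N) :
    b.tensorFinsupp N (v ⊗ₜ n) = (b.repr v).mapRange (· • n) (zero_smul R n) := by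
  ext i
  simp [tensorFinsupp]

theorem Module.Basis.tensorFinsupp_lTensor (b : Module.Basis ι R V) (f : N →ₗ[R] N')
    (x : V ⊗[R] N) :
    b.tensorFinsupp N' (f.lTensor V x) = (b.tensorFinsupp N x).mapRange f f.map_zero := by
  simp only [tensorFinsupp, LinearEquiv.trans_apply, ← finsuppScalarLeft_lTensor]
  congr 1
  induction x using TensorProduct.induction_on with
  | zero => simp
  | tmul v n => simp
  | add x y hx hy => simp only [map_add, hx, hy]

end Basis

namespace TensorProduct

variable {R A V : Type*} [CommSemiring R] [Semiring A] [Algebra R A]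
  [AddCommMonoid V] [Module R V]

theorem tmul_one_injective [Module.Flat R V] (h : Function.Injective (algebraMap R A)) :
    Function.Injective (fun v : V => v ⊗ₜ[R] (1 : A)) := by
  have h_comp : (fun v : V => v ⊗ₜ[R] (1 : A)) =
      (Algebra.linearMap R A).lTensor V ∘ (TensorProduct.rid R V).symm := by
    ext v
    simp
  rw [h_comp]
  exact (Module.Flat.lTensor_preserves_injective_linearMap _ h).comp (LinearEquiv.injective _)

theorem range_tmul_one_eq_setOf_lTensor_fixed [Module.Free R V] {G : Type*}
    (ρ : G → A →ₗ[R] A) (hρ : {a | ∀ g, ρ g a = a} = Set.range (algebraMap R A)) :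
    Set.range (fun v : V => v ⊗ₜ[R] (1 : A)) = {x | ∀ g, (ρ g).lTensor V x = x} := by
  classical
  set b := Module.Free.chooseBasis R V
  set e := b.tensorFinsupp A
  have h_tmul (v : V) : e (v ⊗ₜ 1) = (b.repr v).mapRange (algebraMap R A) (map_zero _) := by
    ext i
    simp [e, b.tensorFinsupp_tmul, Algebra.algebraMap_eq_smul_one]
  have h_range : Set.range (fun v : V => v ⊗ₜ[R] (1 : A)) =
      e ⁻¹' Set.range (Finsupp.mapRange (algebraMap R A) (map_zero _)) := by
    ext x
    constructor
    · rintro ⟨v, rfl⟩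
      exact ⟨b.repr v, (h_tmul v).symm⟩
    · rintro ⟨c, hc⟩
      exact ⟨b.repr.symm c, e.injective (by rw [h_tmul, LinearEquiv.apply_symm_apply, hc])⟩
  have h_fixed (x : V ⊗[R] A) (g : G) :
      (ρ g).lTensor V x = x ↔ ∀ i, ρ g (e x i) = e x i := by
    rw [← e.injective.eq_iff, b.tensorFinsupp_lTensor, Finsupp.ext_iff]
    rfl
  ext x
  rw [h_range, Finsupp.range_mapRange, ← hρ]
  simp only [Set.mem_preimage, Set.mem_ofPred_eq, h_fixed]
  exact forall_comm

end TensorProduct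

/-- Let `L/k` be a Galois field extension (possibly infinite) with Galois group `G`,
and let `V` be a `k`-vector space, with `G` acting on `V ⊗[k] L` by
`g • (v ⊗ a) = v ⊗ g a`.  Then the canonical `k`-linear map `V → V ⊗[k] L`,
`v ↦ v ⊗ 1`, is injective and its image is exactly the subspace of `G`-invariant
elements. -/
theorem stmt_0 (k L : Type*) [Field k] [Field L] [Algebra k L] [IsGalois k L]
    (V : Type*) [AddCommGroup V] [Module k V] :
    Function.Injective (fun v : V => v ⊗ₜ[k] (1 : L)) ∧
    Set.range (fun v : V => v ⊗ₜ[k] (1 : L)) =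
      {x : V ⊗[k] L | ∀ g : (L ≃ₐ[k] L), LinearMap.lTensor V g.toLinearMap x = x} :=
  ⟨tmul_one_injective (algebraMap k L).injective,
    range_tmul_one_eq_setOf_lTensor_fixed (fun g : L ≃ₐ[k] L => g.toLinearMap)
      (Set.ext InfiniteGalois.mem_range_algebraMap_iff_fixed).symm⟩
end

section
/- Let π : X → Y be a dominant morphism of integral schemes, let η be the generic point of Y and κ(η) its residue field. Then the generic fiber X_η = X ×_Y Spec κ(η), the pullback of π along the canonical morphism Spec κ(η) → Y, is an integral scheme (nonempty, reduced and irreducible). -/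
/-!
The first projection `X_η → X` is a base change of `Spec κ(η) → Y`, hence a preimmersion, and
its image `π⁻¹{η}` contains the generic point of `X` because `π` is dominant. A subspace
containing the generic point is dense, so `X_η` is irreducible and its generic point lies over
that of `X`. The stalk maps of a preimmersion are surjective; they are also injective, because
composing with specialization to the generic points factors them through the function field of
`X`, which is a field. So every stalk of `X_η` is a stalk of `X`, hence reduced.
-/

open AlgebraicGeometry CategoryTheory CategoryTheory.Limits Topology Set Function

theorem IsGenericPoint.apply_of_denseRange {α β : Type*} [TopologicalSpace α]
    [TopologicalSpace β] {x : α} {f : α → β} (h : IsGenericPoint x univ) (hf : Continuous f)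
    (hd : DenseRange f) : IsGenericPoint (f x) univ := by
  simpa [image_univ, hd.closure_range] using h.image hf

theorem IsGenericPoint.dense_of_mem {α : Type*} [TopologicalSpace α] {x : α} {s : Set α}
    (h : IsGenericPoint x univ) (hx : x ∈ s) : Dense s :=
  dense_iff_closure_eq.mpr <|
    univ_subset_iff.mp (h.def ▸ closure_mono (singleton_subset_iff.mpr hx))

theorem IsGenericPoint.isIrreducible_of_mem {α : Type*} [TopologicalSpace α] {x : α} {s : Set α}
    (h : IsGenericPoint x univ) (hx : x ∈ s) : IsIrreducible s := by
  rw [← isIrreducible_iff_closure, (h.dense_of_mem hx).closure_eq]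
  exact h.isIrreducible

theorem Topology.IsEmbedding.irreducibleSpace {α β : Type*} [TopologicalSpace α]
    [TopologicalSpace β] {f : α → β} (hf : IsEmbedding f) (h : IsIrreducible (range f)) :
    IrreducibleSpace α :=
  have := Subtype.irreducibleSpace h
  hf.toHomeomorph.irreducibleSpace_iff.mpr this

namespace AlgebraicGeometry

variable {Z X : Scheme}

theorem Scheme.Hom.apply_genericPoint_of_denseRange [IrreducibleSpace Z] [IrreducibleSpace X]
    (f : Z ⟶ X) (hf : DenseRange f) : f (genericPoint Z) = genericPoint X :=
  ((genericPoint_spec Z).apply_of_denseRange f.continuous hf).eq (genericPoint_spec X)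

theorem Scheme.stalkSpecializes_injective_of_eq_genericPoint [IsIntegral X] {x y : X} (h : x ⤳ y)
    (hx : x = genericPoint X) : Injective (X.presheaf.stalkSpecializes h) := by
  subst hx
  exact IsFractionRing.injective (X.presheaf.stalk y) X.functionField

theorem Scheme.Hom.stalkMap_injective_of_apply_eq_genericPoint [IsIntegral X] (f : Z ⟶ X) {z : Z}
    (hz : f z = genericPoint X) : Injective (f.stalkMap z) := by
  have hfield : IsField (X.presheaf.stalk (f z)) := hz ▸ Field.toIsField X.functionField
  let := hfield.toField
  exact (f.stalkMap z).hom.injective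

theorem Scheme.Hom.stalkMap_injective_of_preserves_genericPoint [IsIntegral X] [IrreducibleSpace Z]
    (f : Z ⟶ X) (hf : f (genericPoint Z) = genericPoint X) (z : Z) :
    Injective (f.stalkMap z) := by
  have hζ : genericPoint Z ⤳ z := genericPoint_specializes z
  have hcomp : Injective (X.presheaf.stalkSpecializes (f.base.hom.map_specializes hζ) ≫
      f.stalkMap (genericPoint Z)) :=
    (f.stalkMap_injective_of_apply_eq_genericPoint hf).comp
      (Scheme.stalkSpecializes_injective_of_eq_genericPoint _ hf)
  rw [f.stalkSpecializes_stalkMap _ _ hζ, ConcreteCategory.coe_comp] at hcomp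
  exact hcomp.of_comp

theorem isReduced_of_stalkMap_bijective [IsReduced X] (f : Z ⟶ X)
    (hf : ∀ z, Bijective (f.stalkMap z)) : IsReduced Z := by
  have (z : Z) : _root_.IsReduced (Z.presheaf.stalk z) :=
    isReduced_of_injective _ (RingEquiv.ofBijective _ (hf z)).symm.injective
  exact isReduced_of_isReduced_stalk Z

theorem isIntegral_of_isPreimmersion [IsIntegral X] (f : Z ⟶ X) [IsPreimmersion f]
    (h : genericPoint X ∈ range f) : IsIntegral Z := by
  have : Nonempty Z := ⟨h.choose⟩
  have : IrreducibleSpace Z :=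
    f.isEmbedding.irreducibleSpace ((genericPoint_spec X).isIrreducible_of_mem h)
  have hgen := f.apply_genericPoint_of_denseRange ((genericPoint_spec X).dense_of_mem h)
  have : IsReduced Z := isReduced_of_stalkMap_bijective f fun z ↦
    ⟨f.stalkMap_injective_of_preserves_genericPoint hgen z, f.stalkMap_surjective z⟩
  exact isIntegral_of_irreducibleSpace_of_isReduced Z

end AlgebraicGeometry

/-- Let `π : X → Y` be a dominant morphism of integral schemes, let `η` be the
generic point of `Y` and `κ(η)` its residue field.  Then the generic fiber
`X_η = X ×_Y Spec κ(η)`, the pullback of `π` along the canonical morphism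
`Spec κ(η) → Y`, is an integral scheme. -/
theorem stmt_6 (X Y : Scheme) [IsIntegral X] [IsIntegral Y]
    (π : X ⟶ Y) [IsDominant π] :
    IsIntegral (pullback π (Y.fromSpecResidueField (genericPoint Y))) := by
  apply isIntegral_of_isPreimmersion (pullback.fst _ _)
  rw [Scheme.Pullback.range_fst, Scheme.range_fromSpecResidueField]
  exact π.apply_genericPoint_of_denseRange π.denseRange
end
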